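/- Let q : M → W be a continuous surjection from a compact connected space M such that every fiber q^{-1}(w) is connected. If q induces a bijection on connected components of preimages of points, then for any continuous g : W → ℝ, the composite f = g ∘ q has Reeb space naturally homeomorphic to the Reeb space of g, via the map induced by q. -/
import Mathlib


/-- The Reeb relation of a map `f : X → ℝ`. -/
def ReebRel {X : Type*} [TopologicalSpace X] (f : X → ℝ) : X → X → Prop :=
  fun x y => y ∈ connectedComponentIn (f ⁻¹' {f x}) x

/-- The Reeb space of `f`, with the quotient topology. -/
def ReebSpace {X : Type*} [TopologicalSpace X] (f : X → ℝ) : Type _ :=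
  Quot (ReebRel f)

instance {X : Type*} [TopologicalSpace X] (f : X → ℝ) : TopologicalSpace (ReebSpace f) :=
  instTopologicalSpaceQuot

/-- Preimage of a preconnected set under a closed map with connected fibers is
preconnected. -/
lemma preimage_preconnected_of_closedMap {X Y : Type*} [TopologicalSpace X] [TopologicalSpace Y]
    {q : X → Y} (hcl : IsClosedMap q) {s : Set Y} (hs : IsPreconnected s)
    (hfib : ∀ y ∈ s, IsConnected (q ⁻¹' {y})) : IsPreconnected (q ⁻¹' s) := by
  intro u v hu hv hcov hne1 hne2
  obtain ⟨a, ha, hau⟩ := hne1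
  obtain ⟨b, hb, hbv⟩ := hne2
  have hfibsub : ∀ y ∈ s, q ⁻¹' {y} ⊆ u ∪ v := by
    intro y hy z hz
    have hz' : q z = y := hz
    exact hcov (show q z ∈ s by rw [hz']; exact hy)
  by_cases hsplit : ∃ y ∈ s, ((q ⁻¹' {y}) ∩ u).Nonempty ∧ ((q ⁻¹' {y}) ∩ v).Nonempty
  · obtain ⟨y, hy, hyu, hyv⟩ := hsplit
    obtain ⟨x, hx, hxu, hxv⟩ := (hfib y hy).isPreconnected u v hu hv (hfibsub y hy) hyu hyv
    have hx' : q x = y := hx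
    exact ⟨x, show q x ∈ s by rw [hx']; exact hy, hxu, hxv⟩
  have hsplit' : ∀ y ∈ s, ((q ⁻¹' {y}) ∩ u).Nonempty → ¬((q ⁻¹' {y}) ∩ v).Nonempty :=
    fun y hy h1 h2 => hsplit ⟨y, hy, h1, h2⟩
  -- every fiber over s lies entirely in u or entirely in v
  have hall : ∀ y ∈ s, q ⁻¹' {y} ⊆ u ∨ q ⁻¹' {y} ⊆ v := by
    intro y hy
    by_cases hmu : ((q ⁻¹' {y}) ∩ u).Nonempty
    · left
      intro z hz
      rcases hfibsub y hy hz with h | h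
      · exact h
      · exact absurd ⟨z, hz, h⟩ (hsplit' y hy hmu)
    · right
      intro z hz
      rcases hfibsub y hy hz with h | h
      · exact absurd ⟨z, hz, h⟩ hmu
      · exact h
  set A : Set Y := (q '' uᶜ)ᶜ with hA
  set B : Set Y := (q '' vᶜ)ᶜ with hB
  have hAopen : IsOpen A := (hcl _ hu.isClosed_compl).isOpen_compl
  have hBopen : IsOpen B := (hcl _ hv.isClosed_compl).isOpen_compl
  have hmemA : ∀ y, q ⁻¹' {y} ⊆ u → y ∈ A := by
    rintro y h ⟨x, hxu, rfl⟩
    exact hxu (h rfl)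
  have hmemB : ∀ y, q ⁻¹' {y} ⊆ v → y ∈ B := by
    rintro y h ⟨x, hxv, rfl⟩
    exact hxv (h rfl)
  have hAsub : ∀ y ∈ A, q ⁻¹' {y} ⊆ u := by
    intro y hyA x hx
    by_contra hxu
    exact hyA ⟨x, hxu, hx⟩
  have hBsub : ∀ y ∈ B, q ⁻¹' {y} ⊆ v := by
    intro y hyB x hx
    by_contra hxv
    exact hyB ⟨x, hxv, hx⟩
  have hscov : s ⊆ A ∪ B := by
    intro y hy
    rcases hall y hy with h | h
    · exact Or.inl (hmemA y h)
    · exact Or.inr (hmemB y h)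
  have hsa : (s ∩ A).Nonempty := by
    refine ⟨q a, ha, hmemA _ ?_⟩
    rcases hall (q a) ha with h | h
    · exact h
    · exact absurd ⟨a, rfl, h rfl⟩ (hsplit' (q a) ha ⟨a, rfl, hau⟩)
  have hsb : (s ∩ B).Nonempty := by
    refine ⟨q b, hb, hmemB _ ?_⟩
    rcases hall (q b) hb with h | h
    · exact absurd ⟨b, rfl, hbv⟩ (hsplit' (q b) hb ⟨b, rfl, h rfl⟩)
    · exact h
  obtain ⟨y, hy, hyA, hyB⟩ := hs A B hAopen hBopen hscov hsa hsb
  obtain ⟨x, hx⟩ := (hfib y hy).nonempty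
  have hx' : q x = y := hx
  exact ⟨x, show q x ∈ s by rw [hx']; exact hy, hAsub y hyA hx, hBsub y hyB hx⟩

/-- The Reeb relation is symmetric. -/
lemma reebRel_symm {X : Type*} [TopologicalSpace X] {f : X → ℝ} {a b : X}
    (h : ReebRel f a b) : ReebRel f b a := by
  have hb : b ∈ f ⁻¹' {f a} := connectedComponentIn_subset _ _ h
  have hba : f b = f a := hb
  have h1 : a ∈ connectedComponentIn (f ⁻¹' {f a}) b :=
    isPreconnected_connectedComponentIn.subset_connectedComponentIn h
      (connectedComponentIn_subset _ _)
      (mem_connectedComponentIn (show a ∈ f ⁻¹' {f a} by simp))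
  show a ∈ connectedComponentIn (f ⁻¹' {f b}) b
  rw [show (f ⁻¹' {f b}) = (f ⁻¹' {f a}) by rw [hba]]
  exact h1

/-- The Reeb relation is transitive. -/
lemma reebRel_trans {X : Type*} [TopologicalSpace X] {f : X → ℝ} {a b c : X}
    (h1 : ReebRel f a b) (h2 : ReebRel f b c) : ReebRel f a c := by
  have hb : b ∈ f ⁻¹' {f a} := connectedComponentIn_subset _ _ h1
  have hba : f b = f a := hb
  have hsub : connectedComponentIn (f ⁻¹' {f b}) b ⊆
      connectedComponentIn (f ⁻¹' {f a}) a := by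
    apply isPreconnected_connectedComponentIn.subset_connectedComponentIn
      (reebRel_symm h1)
    rw [show (f ⁻¹' {f b}) = (f ⁻¹' {f a}) by rw [hba]]
    exact connectedComponentIn_subset _ _
  exact hsub h2

/-- Let `q : M → W` be a continuous surjection from a compact connected
space `M` onto a compact Hausdorff space `W` such that every fiber `q⁻¹(w)` is
connected. Then for any continuous `g : W → ℝ`, the Reeb space of `f = g ∘ q` is
naturally homeomorphic to the Reeb space of `g` via the map induced by `q`, and this
homeomorphism commutes with the induced maps to `ℝ`. -/
theorem stmt_14 (M W : Type*) [TopologicalSpace M] [CompactSpace M] [ConnectedSpace M]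
    [TopologicalSpace W] [CompactSpace W] [T2Space W]
    (q : M → W) (hq : Continuous q) (hsurj : Function.Surjective q)
    (hfib : ∀ w : W, IsConnected (q ⁻¹' {w}))
    (g : W → ℝ) (hg : Continuous g) :
    ∃ h : ReebSpace (g ∘ q) ≃ₜ ReebSpace g,
      (∀ x : M, h (Quot.mk (ReebRel (g ∘ q)) x) = Quot.mk (ReebRel g) (q x)) ∧
      ∃ (f' : ReebSpace (g ∘ q) → ℝ) (g' : ReebSpace g → ℝ),
        Continuous f' ∧ Continuous g' ∧
        g ∘ q = f' ∘ Quot.mk (ReebRel (g ∘ q)) ∧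
        g = g' ∘ Quot.mk (ReebRel g) ∧
        f' = g' ∘ h := by
  set f : M → ℝ := g ∘ q with hf
  have hqcl : IsClosedMap q := hq.isClosedMap
  -- Well-definedness: ReebRel f x y → ReebRel g (q x) (q y).
  have hwd : ∀ x y : M, ReebRel f x y →
      Quot.mk (ReebRel g) (q x) = Quot.mk (ReebRel g) (q y) := by
    intro x y hxy
    apply Quot.sound
    have hconn : IsPreconnected (q '' connectedComponentIn (f ⁻¹' {f x}) x) :=
      isPreconnected_connectedComponentIn.image q hq.continuousOn
    have hsub : q '' connectedComponentIn (f ⁻¹' {f x}) x ⊆ g ⁻¹' {g (q x)} := by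
      rintro _ ⟨z, hz, rfl⟩
      have h1 : z ∈ f ⁻¹' {f x} := connectedComponentIn_subset _ _ hz
      simpa [hf] using h1
    have hqx : q x ∈ q '' connectedComponentIn (f ⁻¹' {f x}) x :=
      ⟨x, mem_connectedComponentIn (by simp [hf]), rfl⟩
    exact hconn.subset_connectedComponentIn hqx hsub ⟨y, hxy, rfl⟩
  -- Key: preimage of a component is connected, giving injectivity.
  have hinj : ∀ x y : M, ReebRel g (q x) (q y) →
      Quot.mk (ReebRel f) x = Quot.mk (ReebRel f) y := by
    intro x y hxy
    apply Quot.sound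
    set C := connectedComponentIn (g ⁻¹' {g (q x)}) (q x) with hC
    have hCconn : IsPreconnected C := isPreconnected_connectedComponentIn
    have hTconn : IsPreconnected (q ⁻¹' C) :=
      preimage_preconnected_of_closedMap hqcl hCconn (fun w _ => hfib w)
    have hxT : x ∈ q ⁻¹' C := mem_connectedComponentIn (by simp)
    have hyT : y ∈ q ⁻¹' C := hxy
    have hTsub : q ⁻¹' C ⊆ f ⁻¹' {f x} := by
      intro z hz
      have h1 : q z ∈ g ⁻¹' {g (q x)} :=
        connectedComponentIn_subset (g ⁻¹' {g (q x)}) (q x) (Set.mem_preimage.mp hz)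
      simpa [hf] using h1
    exact hTconn.subset_connectedComponentIn hxT hTsub hyT
  -- The induced map φ : ReebSpace f → ReebSpace g.
  set φ : ReebSpace f → ReebSpace g :=
    Quot.lift (fun x => Quot.mk (ReebRel g) (q x)) hwd with hφ
  have hφsurj : Function.Surjective φ := by
    rintro ⟨w⟩
    obtain ⟨x, rfl⟩ := hsurj w
    exact ⟨Quot.mk _ x, rfl⟩
  -- ReebRel g is closed under EqvGen.
  have heqv : ∀ a b : W, Relation.EqvGen (ReebRel g) a b → ReebRel g a b := by
    intro a b hab
    induction hab with
    | rel a b h => exact h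
    | refl a => exact mem_connectedComponentIn (by simp)
    | symm a b h ih => exact reebRel_symm ih
    | trans a b c hab hbc ih1 ih2 => exact reebRel_trans ih1 ih2
  have hφinj : Function.Injective φ := by
    rintro ⟨x⟩ ⟨y⟩ hxy
    have h1 : Quot.mk (ReebRel g) (q x) = Quot.mk (ReebRel g) (q y) := hxy
    exact hinj x y (heqv _ _ (Quot.eqvGen_exact h1))
  set e : ReebSpace f ≃ ReebSpace g := Equiv.ofBijective φ ⟨hφinj, hφsurj⟩ with he
  have hφcont : Continuous φ := continuous_quot_lift _ ((continuous_quot_mk).comp hq)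
  have hqquot : Topology.IsQuotientMap q := hqcl.isQuotientMap hq hsurj
  have hcomp : Topology.IsQuotientMap ((Quot.mk (ReebRel g)) ∘ q) :=
    isQuotientMap_quot_mk.comp hqquot
  have hφquot : Topology.IsQuotientMap φ := by
    have hh : φ ∘ (Quot.mk (ReebRel f)) = (Quot.mk (ReebRel g)) ∘ q := rfl
    exact Topology.IsQuotientMap.of_comp continuous_quot_mk hφcont (hh ▸ hcomp)
  have hsymm : Continuous e.symm := by
    rw [hφquot.continuous_iff]
    have hh : (⇑e.symm) ∘ φ = id := by
      funext z
      exact e.symm_apply_apply z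
    rw [hh]
    exact continuous_id
  refine ⟨⟨e, hφcont, hsymm⟩, fun x => rfl, ?_⟩
  have hgwd : ∀ a b : W, ReebRel g a b → g a = g b := fun a b hab =>
    (connectedComponentIn_subset _ _ hab).symm
  have hfwd : ∀ a b : M, ReebRel f a b → f a = f b := fun a b hab =>
    (connectedComponentIn_subset _ _ hab).symm
  refine ⟨Quot.lift f hfwd, Quot.lift g hgwd,
    continuous_quot_lift _ (hg.comp hq), continuous_quot_lift _ hg, rfl, rfl, ?_⟩
  funext z
  induction z using Quot.ind with
  | _ x =>
    simp only [Function.comp_apply, Homeomorph.homeomorph_mk_coe, he,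
      Equiv.ofBijective_apply, hφ]
    rfl
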